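/- Let d ≥ 1 and c ≥ 1 be integers and let I = {(j,m) : j ∈ ℕ, 0 ≤ m < c·2^{jd}}. Let 0 < p0 < ∞, τ0 ∈ ℝ and T > τ0. For each Δτ > 0 let p1(Δτ) be defined by 1/p1(Δτ) = Δτ/d + 1/p0. Suppose λ : I → ℝ satisfies ‖λ‖_{b_{p0,p0}^{τ0}} < ∞ and: for every Δτ ∈ (0, T − τ0), ‖λ‖_{b_{p1(Δτ),p1(Δτ)}^{τ0+Δτ}} < ∞, while for every Δτ > T − τ0, ‖λ‖_{b_{p1(Δτ),p1(Δτ)}^{τ0+Δτ}} = ∞. Then the compressibility satisfies κ_{p0,τ0}(λ) = (T − τ0)/d exactly. -/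

import Mathlib

/-!
Along the line `1/p₁ = Δτ/d + 1/p₀` the exponent `τ - d/p` of the level weights is constant, so
every norm `‖λ‖_{b^{τ₀+Δτ}_{p₁,p₁}}` is the plain `ℓ^{p₁}` norm of one sequence `w`, and
`σ_{n,p₀,τ₀}(λ)` is the best `n`-term error of `w` in `ℓ^{p₀}`. For `p₁ < p₀`, `w ∈ ℓ^{p₁}` gives
`σ_n = O(n^{-(1/p₁ - 1/p₀)})` by discarding the entries above a suitable threshold. Conversely,
`σ_n = O(n^{-r})` gives the weak bound `#{w ≥ t} ≲ t^{-q}` with `1/q = r + 1/p₀`, and summing over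
dyadic levels of `w` then gives `w ∈ ℓ^{p₁}` for every `p₁ > q`. Hence the attainable rates are
exactly those below `(T - τ₀)/d`.
-/

open scoped ENNReal

/-- A sequence indexed by the graded index set
`I = {(j, m) : j ∈ ℕ, 0 ≤ m < c·2^(j·d)}`. -/
def GradedSeq (d c : ℕ) : Type := (j : ℕ) → Fin (c * 2 ^ (j * d)) → ℝ

/-- The Besov sequence quasi-norm
`‖λ‖_{b_{p,p}^τ} = (Σ_{j≥0} 2^{j(τ − d/p)p} Σ_{0≤m<c·2^{jd}} |λ(j,m)|^p)^{1/p}`,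
an element of `[0,∞]`. -/
noncomputable def besovNorm (d c : ℕ) (p τ : ℝ) (lam : GradedSeq d c) : ℝ≥0∞ :=
  (∑' j : ℕ, ENNReal.ofReal ((2 : ℝ) ^ ((j : ℝ) * (τ - (d : ℝ) / p) * p)) *
      ∑ m : Fin (c * 2 ^ (j * d)), ENNReal.ofReal (|lam j m| ^ p)) ^ (1 / p)

/-- The sequence obtained from `lam` by setting to zero the entries indexed by the
finite set `F`. -/
noncomputable def zeroOut (d c : ℕ) (lam : GradedSeq d c)
    (F : Finset ((j : ℕ) × Fin (c * 2 ^ (j * d)))) : GradedSeq d c :=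
  fun j m => if (⟨j, m⟩ : (j : ℕ) × Fin (c * 2 ^ (j * d))) ∈ F then 0 else lam j m

/-- The best `n`-term approximation error of `lam` in `b_{p,p}^τ`: the infimum, over all
finite sets `F ⊆ I` of cardinality at most `n`, of the `b_{p,p}^τ` quasi-norm of the
sequence obtained from `lam` by zeroing out the entries indexed by `F`. -/
noncomputable def nTermError (d c : ℕ) (p τ : ℝ) (lam : GradedSeq d c) (n : ℕ) : ℝ≥0∞ :=
  ⨅ (F : Finset ((j : ℕ) × Fin (c * 2 ^ (j * d)))) (_ : F.card ≤ n),
    besovNorm d c p τ (zeroOut d c lam F)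

/-- The `(p,τ)`-compressibility
`κ_{p,τ}(λ) = sup{ r ≥ 0 : sup_n (n+1)^r · σ_{n,p,τ}(λ) < ∞ }`, an element of `[0,∞]`. -/
noncomputable def compressibility (d c : ℕ) (p τ : ℝ) (lam : GradedSeq d c) : ℝ≥0∞ :=
  sSup (ENNReal.ofReal '' {r : ℝ | 0 ≤ r ∧
    (⨆ n : ℕ, ENNReal.ofReal (((n : ℝ) + 1) ^ r) * nTermError d c p τ lam n) < ⊤})

open Finset

theorem ENNReal.sSup_ofReal_image_eq {S : Set ℝ} {K : ℝ} (hK : 0 < K) (hlow : Set.Ico 0 K ⊆ S)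
    (hup : S ⊆ Set.Iic K) : sSup (ENNReal.ofReal '' S) = ENNReal.ofReal K := by
  refine le_antisymm (sSup_le ?_) ?_
  · rintro _ ⟨r, hr, rfl⟩
    exact ENNReal.ofReal_le_ofReal (hup hr)
  · calc ENNReal.ofReal K = ENNReal.ofReal (sSup (Set.Ico 0 K)) := by rw [csSup_Ico hK]
      _ = sSup (ENNReal.ofReal '' Set.Ico 0 K) :=
          ENNReal.ofReal_mono.map_csSup_of_continuousAt ENNReal.continuous_ofReal.continuousAt
            (Set.nonempty_Ico.mpr hK) bddAbove_Ico
      _ ≤ _ := sSup_le_sSup (Set.image_mono hlow)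

theorem ENNReal.exists_mul_inv_two_pow_le_le {x M : ℝ≥0∞} (hx : x ≠ 0) (hxM : x ≤ M)
    (hM : M ≠ ⊤) : ∃ k : ℕ, M * 2⁻¹ ^ k ≤ x ∧ x ≤ 2 * (M * 2⁻¹ ^ k) := by
  classical
  have hex : ∃ k : ℕ, M * 2⁻¹ ^ k ≤ x := by
    obtain ⟨k, hk⟩ := ENNReal.exists_inv_two_pow_lt (ENNReal.div_pos hx hM).ne'
    refine ⟨k, (mul_le_mul_right hk.le M).trans ?_⟩
    exact ENNReal.mul_div_le
  refine ⟨Nat.find hex, Nat.find_spec hex, ?_⟩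
  cases hk : Nat.find hex with
  | zero =>
    rw [pow_zero, mul_one]
    exact hxM.trans (le_mul_of_one_le_left' one_le_two)
  | succ m =>
    have hlt : x < M * 2⁻¹ ^ m := not_le.mp (Nat.find_min hex (hk ▸ m.lt_succ_self))
    calc x ≤ M * 2⁻¹ ^ m := hlt.le
      _ = M * 2⁻¹ ^ m * (2 * 2⁻¹) := by
        rw [ENNReal.mul_inv_cancel two_ne_zero ENNReal.ofNat_ne_top, mul_one]
      _ = 2 * (M * 2⁻¹ ^ (m + 1)) := by ring

theorem ENNReal.rpow_le_two_rpow_mul_tsum {x M : ℝ≥0∞} (hxM : x ≤ M) (hM : M ≠ ⊤) {p : ℝ}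
    (hp : 0 < p) :
    x ^ p ≤ 2 ^ p * ∑' k : ℕ, if M * 2⁻¹ ^ k ≤ x then (M * 2⁻¹ ^ k) ^ p else 0 := by
  rcases eq_or_ne x 0 with rfl | hx
  · simp [ENNReal.zero_rpow_of_pos hp]
  obtain ⟨k, hkx, hxk⟩ := ENNReal.exists_mul_inv_two_pow_le_le hx hxM hM
  calc x ^ p ≤ (2 * (M * 2⁻¹ ^ k)) ^ p := ENNReal.rpow_le_rpow hxk hp.le
    _ = 2 ^ p * (M * 2⁻¹ ^ k) ^ p := ENNReal.mul_rpow_of_nonneg _ _ hp.le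
    _ ≤ _ := by
      gcongr
      exact (if_pos hkx).symm.le.trans (ENNReal.le_tsum k)

section LpSequences

variable {ι : Type*} {g : ι → ℝ≥0∞}

theorem tsum_ite_le_of_card_mul_rpow_le {q p : ℝ} (hq : 0 ≤ q) (hqp : q ≤ p) {A t : ℝ≥0∞}
    (hweak : ∀ S : Finset ι, (∀ i ∈ S, t ≤ g i) → (#S : ℝ≥0∞) * t ^ q ≤ A) :
    ∑' i, (if t ≤ g i then t ^ p else 0) ≤ A * t ^ (p - q) := by
  classical
  refine ENNReal.summable.tsum_le_of_sum_le fun S => ?_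
  rw [← Finset.sum_filter, Finset.sum_const, nsmul_eq_mul,
    show p = q + (p - q) by ring, ENNReal.rpow_add_of_nonneg _ _ hq (by linarith), ← mul_assoc,
    add_sub_cancel_left]
  gcongr
  exact hweak _ fun i hi => (Finset.mem_filter.mp hi).2

theorem tsum_rpow_ne_top_of_card_mul_rpow_le {q p : ℝ} (hq : 0 < q) (hqp : q < p) {A : ℝ≥0∞}
    (hA : A ≠ ⊤)
    (hweak : ∀ (t : ℝ≥0∞) (S : Finset ι), (∀ i ∈ S, t ≤ g i) → (#S : ℝ≥0∞) * t ^ q ≤ A) :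
    ∑' i, g i ^ p ≠ ⊤ := by
  set M := A ^ q⁻¹
  have hMT : M ≠ ⊤ := ENNReal.rpow_ne_top_of_nonneg (inv_nonneg.mpr hq.le) hA
  have hgM : ∀ i, g i ≤ M := fun i =>
    (ENNReal.le_rpow_inv_iff hq).mpr <| by simpa using hweak (g i) {i} (by simp)
  set ρ : ℝ≥0∞ := 2⁻¹ ^ (p - q)
  have hρ : ρ < 1 := ENNReal.rpow_lt_one (by norm_num) (by linarith)
  have hlevel : ∀ k : ℕ, (M * 2⁻¹ ^ k) ^ (p - q) = M ^ (p - q) * ρ ^ k := fun k => by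
    rw [ENNReal.mul_rpow_of_nonneg _ _ (by linarith)]
    congr 1
    rw [← ENNReal.rpow_natCast, ← ENNReal.rpow_mul, mul_comm, ENNReal.rpow_mul,
      ENNReal.rpow_natCast]
  have hbound : ∑' i, g i ^ p ≤ 2 ^ p * (A * M ^ (p - q) * (1 - ρ)⁻¹) :=
    calc ∑' i, g i ^ p
        ≤ ∑' i, 2 ^ p * ∑' k : ℕ,
            if M * 2⁻¹ ^ k ≤ g i then (M * 2⁻¹ ^ k) ^ p else 0 :=
          ENNReal.tsum_le_tsum fun i => ENNReal.rpow_le_two_rpow_mul_tsum (hgM i) hMT (hq.trans hqp)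
      _ = 2 ^ p * ∑' (k : ℕ) (i : ι),
            if M * 2⁻¹ ^ k ≤ g i then (M * 2⁻¹ ^ k) ^ p else 0 := by
          rw [ENNReal.tsum_mul_left, ENNReal.tsum_comm]
      _ ≤ 2 ^ p * ∑' k : ℕ, A * (M ^ (p - q) * ρ ^ k) := by
          gcongr with k
          rw [← hlevel]
          exact tsum_ite_le_of_card_mul_rpow_le hq.le hqp.le (hweak _)
      _ = 2 ^ p * (A * M ^ (p - q) * (1 - ρ)⁻¹) := by
          rw [ENNReal.tsum_mul_left, ENNReal.tsum_mul_left, ENNReal.tsum_geometric, mul_assoc]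
  refine ne_top_of_le_ne_top ?_ hbound
  have : (1 - ρ)⁻¹ ≠ ⊤ := ENNReal.inv_ne_top.mpr (tsub_pos_of_lt hρ).ne'
  have : M ^ (p - q) ≠ ⊤ := ENNReal.rpow_ne_top_of_nonneg (by linarith) hMT
  finiteness

theorem tsum_ite_rpow_le {p₀ p₁ : ℝ} (hp₁ : 0 ≤ p₁) (hp : p₁ ≤ p₀) (t : ℝ≥0∞) :
    ∑' i, (if t ≤ g i then 0 else g i ^ p₀) ≤ t ^ (p₀ - p₁) * ∑' i, g i ^ p₁ := by
  rw [← ENNReal.tsum_mul_left]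
  refine ENNReal.tsum_le_tsum fun i => ?_
  split_ifs with hi
  · exact bot_le
  · calc g i ^ p₀ = g i ^ p₁ * g i ^ (p₀ - p₁) := by
          rw [← ENNReal.rpow_add_of_nonneg _ _ hp₁ (by linarith), add_sub_cancel]
      _ ≤ g i ^ p₁ * t ^ (p₀ - p₁) :=
          mul_le_mul_right (ENNReal.rpow_le_rpow (not_le.mp hi).le (by linarith)) _
      _ = t ^ (p₀ - p₁) * g i ^ p₁ := mul_comm _ _

variable [DecidableEq ι]

noncomputable def bestNTermError (g : ι → ℝ≥0∞) (p : ℝ) (n : ℕ) : ℝ≥0∞ :=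
  ⨅ (F : Finset ι) (_ : #F ≤ n), (∑' i, if i ∈ F then 0 else g i ^ p) ^ (1 / p)

theorem bestNTermError_le_of_lt_mul_rpow {p₀ p₁ : ℝ} (hp₁ : 0 < p₁) (hp : p₁ ≤ p₀)
    (hg : ∑' i, g i ^ p₁ ≠ ⊤) {n : ℕ} {t : ℝ≥0∞} (ht : t ^ p₁ ≠ 0)
    (hnt : ∑' i, g i ^ p₁ < ((n : ℝ≥0∞) + 1) * t ^ p₁) :
    bestNTermError g p₀ n ≤ (t ^ (p₀ - p₁) * ∑' i, g i ^ p₁) ^ (1 / p₀) := by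
  have hfin : {i | t ≤ g i}.Finite := by
    convert ENNReal.finite_const_le_of_tsum_ne_top hg ht using 3
    exact (ENNReal.rpow_le_rpow_iff hp₁).symm
  set F := hfin.toFinset
  have hcard : #F ≤ n := by
    by_contra! hn
    refine hnt.not_ge ?_
    calc ((n : ℝ≥0∞) + 1) * t ^ p₁ ≤ #F • t ^ p₁ := by
          rw [nsmul_eq_mul]
          gcongr
          exact_mod_cast hn
      _ ≤ ∑ i ∈ F, g i ^ p₁ := Finset.card_nsmul_le_sum _ _ _ fun i hi =>
          ENNReal.rpow_le_rpow (hfin.mem_toFinset.mp hi) hp₁.le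
      _ ≤ _ := ENNReal.sum_le_tsum _
  refine (iInf₂_le F hcard).trans (ENNReal.rpow_le_rpow ?_ (one_div_nonneg.mpr (hp₁.le.trans hp)))
  simpa only [F, Set.Finite.mem_toFinset, Set.mem_ofPred_eq] using tsum_ite_rpow_le hp₁.le hp t

theorem rpow_mul_bestNTermError_le {p₀ p₁ : ℝ} (hp₁ : 0 < p₁) (hp : p₁ < p₀)
    (hg : ∑' i, g i ^ p₁ ≠ ⊤) (n : ℕ) :
    ((n : ℝ≥0∞) + 1) ^ (1 / p₁ - 1 / p₀) * bestNTermError g p₀ n ≤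
      ((2 * ∑' i, g i ^ p₁) ^ ((p₀ - p₁) / p₁) * ∑' i, g i ^ p₁) ^ (1 / p₀) := by
  have hp₀ : 0 < p₀ := hp₁.trans hp
  set S := ∑' i, g i ^ p₁
  rcases eq_or_ne S 0 with hS0 | hS0
  · have hg0 : ∀ i, g i = 0 := fun i => by
      simpa [hp₁, not_lt.mpr hp₁.le] using ENNReal.tsum_eq_zero.mp hS0 i
    have : bestNTermError g p₀ n = 0 :=
      le_zero_iff.mp <| (iInf₂_le ∅ (by simp)).trans_eq <| by
        simp [hg0, ENNReal.zero_rpow_of_pos hp₀, hp₀]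
    simp [this]
  set t := (2 * S / ((n : ℝ≥0∞) + 1)) ^ p₁⁻¹
  have ht : t ^ p₁ = 2 * S / ((n : ℝ≥0∞) + 1) := ENNReal.rpow_inv_rpow hp₁.ne' _
  have herr : bestNTermError g p₀ n ≤ (t ^ (p₀ - p₁) * S) ^ (1 / p₀) := by
    refine bestNTermError_le_of_lt_mul_rpow hp₁ hp.le hg ?_ ?_
    · rw [ht]
      exact ENNReal.div_ne_zero.mpr ⟨mul_ne_zero two_ne_zero hS0, by finiteness⟩
    · rw [ht, ENNReal.mul_div_cancel (by positivity) (by finiteness), two_mul]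
      exact ENNReal.lt_add_right hg hS0
  set e := (p₀ - p₁) / p₁
  have he : 0 ≤ e := div_nonneg (by linarith) hp₁.le
  have hδ : 1 / p₁ - 1 / p₀ = e * (1 / p₀) := by
    simp only [e]
    field_simp
  have htpow : t ^ (p₀ - p₁) = (2 * S) ^ e / ((n : ℝ≥0∞) + 1) ^ e := by
    rw [← ENNReal.rpow_mul, ← ENNReal.div_rpow_of_nonneg _ _ he, inv_mul_eq_div]
  calc ((n : ℝ≥0∞) + 1) ^ (1 / p₁ - 1 / p₀) * bestNTermError g p₀ n
      ≤ (((n : ℝ≥0∞) + 1) ^ e) ^ (1 / p₀) * (t ^ (p₀ - p₁) * S) ^ (1 / p₀) := by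
        rw [hδ, ENNReal.rpow_mul]
        exact mul_le_mul_right herr _
    _ = (((n : ℝ≥0∞) + 1) ^ e * ((2 * S) ^ e / ((n : ℝ≥0∞) + 1) ^ e) * S) ^ (1 / p₀) := by
        rw [← ENNReal.mul_rpow_of_nonneg _ _ (by positivity), htpow, mul_assoc]
    _ = ((2 * S) ^ e * S) ^ (1 / p₀) := by
        rw [ENNReal.mul_div_cancel (by positivity)
          (ENNReal.rpow_ne_top_of_nonneg he (by finiteness))]

theorem iSup_rpow_mul_bestNTermError_ne_top {p₀ p₁ r : ℝ} (hp₁ : 0 < p₁) (hp : p₁ < p₀)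
    (hr : r ≤ 1 / p₁ - 1 / p₀) (hg : ∑' i, g i ^ p₁ ≠ ⊤) :
    ⨆ n : ℕ, ((n : ℝ≥0∞) + 1) ^ r * bestNTermError g p₀ n ≠ ⊤ := by
  refine ne_top_of_le_ne_top ?_ <| iSup_le fun n =>
    (mul_le_mul_left (ENNReal.rpow_le_rpow_of_exponent_le le_add_self hr) _).trans
      (rpow_mul_bestNTermError_le hp₁ hp hg n)
  have he : 0 ≤ (p₀ - p₁) / p₁ := div_nonneg (by linarith) hp₁.le
  have h2 : (2 * ∑' i, g i ^ p₁) ^ ((p₀ - p₁) / p₁) ≠ ⊤ :=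
    ENNReal.rpow_ne_top_of_nonneg he (by finiteness)
  exact ENNReal.rpow_ne_top_of_nonneg (one_div_nonneg.mpr (hp₁.trans hp).le) (by finiteness)

theorem rpow_mul_le_bestNTermError {p : ℝ} (hp : 0 < p) {t : ℝ≥0∞} (S : Finset ι)
    (hS : ∀ i ∈ S, t ≤ g i) (n : ℕ) :
    ((#S - n : ℕ) : ℝ≥0∞) ^ (1 / p) * t ≤ bestNTermError g p n := by
  refine le_iInf₂ fun F hF => ?_
  have hcount : ((#S - n : ℕ) : ℝ≥0∞) * t ^ p ≤ ∑' i, if i ∈ F then 0 else g i ^ p :=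
    calc ((#S - n : ℕ) : ℝ≥0∞) * t ^ p ≤ #(S \ F) • t ^ p := by
          rw [nsmul_eq_mul]
          gcongr
          exact (Nat.sub_le_sub_left hF _).trans (Finset.le_card_sdiff F S)
      _ ≤ ∑ i ∈ S \ F, if i ∈ F then 0 else g i ^ p := by
          refine Finset.card_nsmul_le_sum _ _ _ fun i hi => ?_
          rw [Finset.mem_sdiff] at hi
          rw [if_neg hi.2]
          exact ENNReal.rpow_le_rpow (hS i hi.1) hp.le
      _ ≤ _ := ENNReal.sum_le_tsum _
  calc ((#S - n : ℕ) : ℝ≥0∞) ^ (1 / p) * t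
      = (((#S - n : ℕ) : ℝ≥0∞) * t ^ p) ^ (1 / p) := by
        rw [ENNReal.mul_rpow_of_nonneg _ _ (by positivity), ← ENNReal.rpow_mul,
          mul_one_div_cancel hp.ne', ENNReal.rpow_one]
    _ ≤ _ := by gcongr

theorem card_mul_rpow_le_of_bestNTermError_le {p r : ℝ} (hp : 0 < p) (hr : 0 ≤ r)
    {C : ℝ≥0∞} (hC : ∀ n : ℕ, ((n : ℝ≥0∞) + 1) ^ r * bestNTermError g p n ≤ C)
    (t : ℝ≥0∞) (S : Finset ι) (hS : ∀ i ∈ S, t ≤ g i) :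
    (#S : ℝ≥0∞) * t ^ (r + 1 / p)⁻¹ ≤ 2 * C ^ (r + 1 / p)⁻¹ := by
  set N := #S
  have hβ : 0 < r + 1 / p := by positivity
  set n := (N - 1) / 2
  have hN : N ^ (r + 1 / p) * t ≤ 2 ^ (r + 1 / p) * C :=
    calc (N : ℝ≥0∞) ^ (r + 1 / p) * t = (N : ℝ≥0∞) ^ r * (N : ℝ≥0∞) ^ (1 / p) * t := by
          rw [ENNReal.rpow_add_of_nonneg _ _ hr (by positivity)]
      _ ≤ (2 * ((n : ℝ≥0∞) + 1)) ^ r * (2 * ((N - n : ℕ) : ℝ≥0∞)) ^ (1 / p) * t := by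
          gcongr
          · exact_mod_cast (by omega : N ≤ 2 * (n + 1))
          · exact_mod_cast (by omega : N ≤ 2 * (N - n))
      _ = 2 ^ (r + 1 / p) * (((n : ℝ≥0∞) + 1) ^ r * (((N - n : ℕ) : ℝ≥0∞) ^ (1 / p) * t)) := by
          rw [ENNReal.mul_rpow_of_nonneg _ _ hr, ENNReal.mul_rpow_of_nonneg _ _ (by positivity),
            ENNReal.rpow_add_of_nonneg _ _ hr (by positivity)]
          ring
      _ ≤ 2 ^ (r + 1 / p) * C := by
          gcongr
          exact (mul_le_mul_right (rpow_mul_le_bestNTermError hp S hS n) _).trans (hC n)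
  have := ENNReal.rpow_le_rpow hN (inv_pos.mpr hβ).le
  rwa [ENNReal.mul_rpow_of_nonneg _ _ (inv_pos.mpr hβ).le,
    ENNReal.mul_rpow_of_nonneg _ _ (inv_pos.mpr hβ).le, ← ENNReal.rpow_mul, ← ENNReal.rpow_mul,
    mul_inv_cancel₀ hβ.ne', ENNReal.rpow_one, ENNReal.rpow_one] at this

theorem tsum_rpow_ne_top_of_iSup_rpow_mul_bestNTermError_ne_top {p₀ p₁ r : ℝ} (hp₀ : 0 < p₀)
    (hp₁ : 0 < p₁) (hr : 0 ≤ r) (hp : 1 / p₁ < r + 1 / p₀)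
    (hdecay : ⨆ n : ℕ, ((n : ℝ≥0∞) + 1) ^ r * bestNTermError g p₀ n ≠ ⊤) :
    ∑' i, g i ^ p₁ ≠ ⊤ := by
  have hq : (r + 1 / p₀)⁻¹ < p₁ := by
    rw [inv_lt_comm₀ (by positivity) hp₁, ← one_div]
    exact hp
  refine tsum_rpow_ne_top_of_card_mul_rpow_le (by positivity) hq ?_
    (card_mul_rpow_le_of_bestNTermError_le hp₀ hr
      (le_iSup (fun n : ℕ => ((n : ℝ≥0∞) + 1) ^ r * bestNTermError g p₀ n)))
  exact ENNReal.mul_ne_top ENNReal.ofNat_ne_top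
    (ENNReal.rpow_ne_top_of_nonneg (by positivity) hdecay)

end LpSequences

section Besov

variable {d c : ℕ}

noncomputable def besovWeight (d c : ℕ) (s : ℝ) (lam : GradedSeq d c)
    (i : (j : ℕ) × Fin (c * 2 ^ (j * d))) : ℝ≥0∞ :=
  ENNReal.ofReal ((2 : ℝ) ^ ((i.1 : ℝ) * s) * |lam i.1 i.2|)

theorem besovNorm_eq_tsum_besovWeight {p : ℝ} (hp : 0 < p) (τ : ℝ) (lam : GradedSeq d c) :
    besovNorm d c p τ lam = (∑' i, besovWeight d c (τ - d / p) lam i ^ p) ^ (1 / p) := by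
  rw [besovNorm, ENNReal.tsum_sigma']
  congr 1
  refine tsum_congr fun j => ?_
  rw [tsum_fintype, Finset.mul_sum]
  refine Finset.sum_congr rfl fun m _ => ?_
  rw [besovWeight, ENNReal.ofReal_rpow_of_nonneg (by positivity) hp.le,
    Real.mul_rpow (by positivity) (abs_nonneg _), ← Real.rpow_mul zero_le_two,
    ENNReal.ofReal_mul (by positivity)]

theorem besovWeight_zeroOut (s : ℝ) (lam : GradedSeq d c)
    (F : Finset ((j : ℕ) × Fin (c * 2 ^ (j * d)))) (i : (j : ℕ) × Fin (c * 2 ^ (j * d))) :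
    besovWeight d c s (zeroOut d c lam F) i = if i ∈ F then 0 else besovWeight d c s lam i := by
  unfold besovWeight zeroOut
  split_ifs <;> simp

theorem nTermError_eq_bestNTermError {p : ℝ} (hp : 0 < p) (τ : ℝ) (lam : GradedSeq d c)
    (n : ℕ) : nTermError d c p τ lam n = bestNTermError (besovWeight d c (τ - d / p) lam) p n := by
  refine iInf_congr fun F => iInf_congr fun _ => ?_
  simp_rw [besovNorm_eq_tsum_besovWeight hp, besovWeight_zeroOut]
  congr 1
  refine tsum_congr fun i => ?_
  split_ifs <;> simp [ENNReal.zero_rpow_of_pos hp]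

theorem compressibility_eq_sSup (p τ : ℝ) (lam : GradedSeq d c) :
    compressibility d c p τ lam = sSup (ENNReal.ofReal '' {r : ℝ | 0 ≤ r ∧
      ⨆ n : ℕ, ((n : ℝ≥0∞) + 1) ^ r * nTermError d c p τ lam n ≠ ⊤}) := by
  refine congrArg (fun S => sSup (ENNReal.ofReal '' S)) <|
    Set.ext fun r => and_congr_right fun hr => ?_
  rw [lt_top_iff_ne_top]
  congr! 4 with n
  rw [← ENNReal.ofReal_rpow_of_nonneg (by positivity) hr, ENNReal.ofReal_add (by positivity)
    zero_le_one, ENNReal.ofReal_natCast, ENNReal.ofReal_one]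

variable {p₀ τ₀ Δτ : ℝ} {lam : GradedSeq d c}

-- `τ - d / p` is constant along the Sobolev embedding line `1 / p₁ = Δτ / d + 1 / p₀`.
theorem besovNorm_ne_top_iff_tsum_ne_top (hd : 0 < (d : ℝ)) (hp₀ : 0 < p₀) (hΔτ : 0 < Δτ) :
    besovNorm d c (Δτ / d + 1 / p₀)⁻¹ (τ₀ + Δτ) lam ≠ ⊤ ↔
      ∑' i, besovWeight d c (τ₀ - d / p₀) lam i ^ (Δτ / d + 1 / p₀)⁻¹ ≠ ⊤ := by
  have hp₁ : 0 < (Δτ / d + 1 / p₀)⁻¹ := by positivity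
  have hline : τ₀ + Δτ - d / (Δτ / d + 1 / p₀)⁻¹ = τ₀ - d / p₀ := by
    field_simp
    ring
  rw [besovNorm_eq_tsum_besovWeight hp₁, hline, ne_eq,
    ENNReal.rpow_eq_top_iff_of_pos (by positivity)]

theorem iSup_rpow_mul_nTermError_ne_top_of_besovNorm_ne_top (hd : 0 < (d : ℝ)) (hp₀ : 0 < p₀)
    (hΔτ : 0 < Δτ) {r : ℝ} (hr : r ≤ Δτ / d)
    (hlam : besovNorm d c (Δτ / d + 1 / p₀)⁻¹ (τ₀ + Δτ) lam ≠ ⊤) :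
    ⨆ n : ℕ, ((n : ℝ≥0∞) + 1) ^ r * nTermError d c p₀ τ₀ lam n ≠ ⊤ := by
  simp_rw [nTermError_eq_bestNTermError hp₀]
  refine iSup_rpow_mul_bestNTermError_ne_top (by positivity) ?_ (by simpa using hr)
    ((besovNorm_ne_top_iff_tsum_ne_top hd hp₀ hΔτ).mp hlam)
  rw [inv_lt_comm₀ (by positivity) hp₀, inv_eq_one_div]
  exact lt_add_of_pos_left _ (by positivity)

theorem besovNorm_ne_top_of_iSup_rpow_mul_nTermError_ne_top (hd : 0 < (d : ℝ)) (hp₀ : 0 < p₀)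
    (hΔτ : 0 < Δτ) {r : ℝ} (hr : 0 ≤ r) (hrΔ : Δτ / d < r)
    (hdecay : ⨆ n : ℕ, ((n : ℝ≥0∞) + 1) ^ r * nTermError d c p₀ τ₀ lam n ≠ ⊤) :
    besovNorm d c (Δτ / d + 1 / p₀)⁻¹ (τ₀ + Δτ) lam ≠ ⊤ := by
  simp_rw [nTermError_eq_bestNTermError hp₀] at hdecay
  exact (besovNorm_ne_top_iff_tsum_ne_top hd hp₀ hΔτ).mpr <|
    tsum_rpow_ne_top_of_iSup_rpow_mul_bestNTermError_ne_top hp₀ (by positivity) hr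
      (by simpa using hrΔ) hdecay

end Besov

theorem compressibility_exact_general (d c : ℕ) (hd : 1 ≤ d)
    (p0 τ0 T : ℝ) (hp0 : 0 < p0) (hT : τ0 < T)
    (lam : GradedSeq d c)
    (hfin : ∀ Δτ : ℝ, 0 < Δτ → Δτ < T - τ0 →
      besovNorm d c ((Δτ / (d : ℝ) + 1 / p0)⁻¹) (τ0 + Δτ) lam < ⊤)
    (hinf : ∀ Δτ : ℝ, T - τ0 < Δτ →
      besovNorm d c ((Δτ / (d : ℝ) + 1 / p0)⁻¹) (τ0 + Δτ) lam = ⊤) :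
    compressibility d c p0 τ0 lam = ENNReal.ofReal ((T - τ0) / (d : ℝ)) := by
  have hd' : (0 : ℝ) < d := by exact_mod_cast hd
  set K := (T - τ0) / d
  have hK : 0 < K := div_pos (sub_pos.mpr hT) hd'
  have hdK : d * K = T - τ0 := mul_div_cancel₀ _ hd'.ne'
  -- both inclusions test the midpoint `Δτ = d (r + K) / 2`
  have hmid : ∀ r, 0 ≤ r → 0 < d * ((r + K) / 2) ∧ d * ((r + K) / 2) / d = (r + K) / 2 :=
    fun r hr => ⟨by positivity, mul_div_cancel_left₀ _ hd'.ne'⟩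
  rw [compressibility_eq_sSup]
  refine ENNReal.sSup_ofReal_image_eq hK (fun r ⟨hr, hrK⟩ => ⟨hr, ?_⟩)
    (fun r ⟨hr, hdecay⟩ => Set.mem_Iic.mpr <| not_lt.mp fun hrK => ?_)
  · obtain ⟨hΔ, hΔd⟩ := hmid r hr
    refine iSup_rpow_mul_nTermError_ne_top_of_besovNorm_ne_top hd' hp0 hΔ (by rw [hΔd]; linarith)
      (hfin _ hΔ ?_).ne
    rw [← hdK]
    exact mul_lt_mul_of_pos_left (by linarith) hd'
  · obtain ⟨hΔ, hΔd⟩ := hmid r hr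
    refine besovNorm_ne_top_of_iSup_rpow_mul_nTermError_ne_top hd' hp0 hΔ hr
      (by rw [hΔd]; linarith) hdecay (hinf _ ?_)
    rw [← hdK]
    exact mul_lt_mul_of_pos_left (by linarith) hd'

theorem compressibility_exact (d c : ℕ) (hd : 1 ≤ d) (hc : 1 ≤ c)
    (p0 τ0 T : ℝ) (hp0 : 0 < p0) (hT : τ0 < T)
    (lam : GradedSeq d c) (hlam : besovNorm d c p0 τ0 lam < ⊤)
    (hfin : ∀ Δτ : ℝ, 0 < Δτ → Δτ < T - τ0 →
      besovNorm d c ((Δτ / (d : ℝ) + 1 / p0)⁻¹) (τ0 + Δτ) lam < ⊤)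
    (hinf : ∀ Δτ : ℝ, T - τ0 < Δτ →
      besovNorm d c ((Δτ / (d : ℝ) + 1 / p0)⁻¹) (τ0 + Δτ) lam = ⊤) :
    compressibility d c p0 τ0 lam = ENNReal.ofReal ((T - τ0) / (d : ℝ)) :=
  compressibility_exact_general d c hd p0 τ0 T hp0 hT lam hfin hinf
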